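/- arXiv:1009.2831 — 4 statements merged into one kernel-verified Lean document; each statement's English description precedes it below -/
import Mathlib

section
/- a^{(1)}_δ = ∏_{i=1}^{L-1}(2i+1)!, where δ = (L, L-1, ..., 1). -/
/-!
Reversing the order of rows and columns turns the matrix into `(x_j ^ (2i+1))` with `x_j = j + 1`,
which is the transposed Vandermonde matrix of the `x_j ^ 2` with column `j` scaled by `x_j`.
Grouping the Vandermonde product by its larger index, column `j` contributes
`x_j * ∏_{i<j} (x_j - x_i)(x_j + x_i) = (j+1) * j! * (j+2)⋯(2j+1) = (2j+1)!`.
-/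

open Finset Matrix Nat

theorem Matrix.det_vandermonde_eq_prod_Iio {R : Type*} [CommRing R] {n : ℕ} (v : Fin n → R) :
    det (vandermonde v) = ∏ j, ∏ i ∈ Iio j, (v j - v i) := by
  rw [det_vandermonde]
  exact prod_comm' fun i j => by simp

theorem Matrix.det_of_pow_two_mul_add_one {R : Type*} [CommRing R] {n : ℕ} (x : Fin n → R) :
    det (of fun i j : Fin n => x j ^ (2 * (i : ℕ) + 1)) =
      ∏ j, (x j * ∏ i ∈ Iio j, (x j ^ 2 - x i ^ 2)) := by
  have hpow : (of fun i j : Fin n => x j ^ (2 * (i : ℕ) + 1)) =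
      of fun i j => x j * (vandermonde fun k => x k ^ 2)ᵀ i j := by
    ext i j
    simp only [of_apply, transpose_apply, vandermonde_apply]
    ring
  rw [hpow, det_mul_row, det_transpose, det_vandermonde_eq_prod_Iio, prod_mul_distrib]

theorem Nat.succ_mul_prod_range_sub_mul_add (j : ℕ) :
    (j + 1) * ∏ i ∈ range j, ((j - i) * (j + 2 + i)) = (2 * j + 1)! := by
  rw [prod_mul_distrib, ← descFactorial_eq_prod_range, ← ascFactorial_eq_prod_range,
    descFactorial_self, ← mul_assoc, ← factorial_succ, factorial_mul_ascFactorial]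
  ring_nf

theorem succ_mul_prod_range_sq_sub_sq (j : ℕ) :
    ((j : ℤ) + 1) * ∏ i ∈ range j, (((j : ℤ) + 1) ^ 2 - ((i : ℤ) + 1) ^ 2) = (2 * j + 1)! := by
  have hfactor : ∀ i ∈ range j,
      ((j : ℤ) + 1) ^ 2 - ((i : ℤ) + 1) ^ 2 = (((j - i) * (j + 2 + i) : ℕ) : ℤ) := by
    intro i hi
    push_cast [Nat.cast_sub (mem_range.mp hi).le]
    ring
  rw [prod_congr rfl hfactor, ← Nat.succ_mul_prod_range_sub_mul_add]
  push_cast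
  rfl

theorem prod_Icc_one_pred_eq_prod_range {M : Type*} [CommMonoid M] {f : ℕ → M} (hf : f 0 = 1)
    (n : ℕ) :
    ∏ i ∈ Icc 1 (n - 1), f i = ∏ i ∈ range n, f i :=
  prod_subset (fun i hi => by simp at hi ⊢; omega) fun i hi hi' => by
    obtain rfl : i = 0 := by simp at hi hi'; omega
    exact hf

/-- `a^{(1)}_δ = det[δ_j^{2(L-i)+1}] = ∏_{i=1}^{L-1} (2i+1)!`, where `δ_j = L-j+1`. -/
theorem a1_delta_eval (L : ℕ) :
    Matrix.det (Matrix.of fun i j : Fin L =>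
        ((L - (j : ℕ) : ℕ) : ℤ) ^ (2 * (L - 1 - (i : ℕ)) + 1)) =
      ∏ i ∈ Finset.Icc 1 (L - 1), (Nat.factorial (2 * i + 1) : ℤ) := by
  have hrev : (Matrix.of fun i j : Fin L =>
        ((L - (j : ℕ) : ℕ) : ℤ) ^ (2 * (L - 1 - (i : ℕ)) + 1)).submatrix Fin.revPerm Fin.revPerm =
      of fun i j : Fin L => ((j : ℤ) + 1) ^ (2 * (i : ℕ) + 1) := by
    ext i j
    simp only [submatrix_apply, of_apply, Fin.revPerm_apply, Fin.val_rev]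
    rw [show L - (L - (j + 1)) = j + 1 by omega, show L - 1 - (L - (i + 1)) = i by omega]
    push_cast
    rfl
  rw [← det_submatrix_equiv_self Fin.revPerm, hrev, det_of_pow_two_mul_add_one,
    prod_Icc_one_pred_eq_prod_range (by simp), ← Fin.prod_univ_eq_prod_range]
  refine prod_congr rfl fun j _ => ?_
  rw [← succ_mul_prod_range_sq_sub_sq, ← Nat.Iio_eq_range, ← Fin.map_valEmbedding_Iio, prod_map]
  rfl
end

section
/- With δ = (L, ..., 1), the function φ_δ(z) = a^{(2)}_δ(z)/a^{(1)}_δ equals (z+1)(z-1)^{2L-1} / (z^L (2L-1)!). -/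
/-!
Write `L = n + 1` and `Λ f = Δ^{2n+1} f (-n)` for the iterated forward difference of
`f : ℤ → ℝ`. It only sees `f` on `[-n, n + 1]`, so on odd functions it is a linear combination
`∑ⱼ wⱼ f(δⱼ)` of the values at `δⱼ = n + 1 - j`. As `Λ (x ↦ x^{2r+1})` is `(2n+1)!` for `r = n`
and `0` for `r < n`, the vector `c = w / (2n+1)!` solves `A c = e₀` for the matrix `A` of
`a^{(1)}_δ`, and Cramer's rule turns the quotient of determinants into
`∑ⱼ cⱼ (z^{δⱼ} - z^{-δⱼ}) = Λ (x ↦ z^x - z^{-x}) / (2n+1)!`, which `Δ^k z^x = (z - 1)^k z^x`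
evaluates.
-/

open Finset Function fwdDiff

section fwdDiff

variable {M G : Type*} [AddCommMonoid M] [AddCommGroup G]

theorem fwdDiff_iter_apply_congr {f g : M → G} {h y : M} {k : ℕ}
    (hfg : ∀ i ≤ k, f (y + i • h) = g (y + i • h)) : Δ_[h] ^[k] f y = Δ_[h] ^[k] g y := by
  simp only [fwdDiff_iter_eq_sum_shift]
  exact sum_congr rfl fun i hi ↦ by rw [hfg i (Nat.lt_succ_iff.mp (mem_range.mp hi))]

theorem fwdDiff_iter_comp_addMonoidHom {M' : Type*} [AddCommMonoid M'] (e : M →+ M')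
    (g : M' → G) (h : M) (k : ℕ) : Δ_[h] ^[k] (g ∘ e) = Δ_[e h] ^[k] g ∘ e := by
  induction k generalizing g with
  | zero => rfl
  | succ k ih =>
    have hΔ : Δ_[h] (g ∘ e) = Δ_[e h] g ∘ e := funext fun x ↦ by simp [fwdDiff]
    rw [iterate_succ_apply, iterate_succ_apply, hΔ, ih]

end fwdDiff

theorem fwdDiff_iter_intCast_pow {R : Type*} [CommRing R] {n r : ℕ} (hr : r ≤ n) (y : ℤ) :
    Δ_[1] ^[2 * n + 1] (fun x : ℤ ↦ (x : R) ^ (2 * r + 1)) y =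
      if r = n then ((2 * n + 1).factorial : R) else 0 := by
  have hcomp : (fun x : ℤ ↦ (x : R) ^ (2 * r + 1)) = (· ^ (2 * r + 1)) ∘ Int.castAddHom R := rfl
  rw [hcomp, fwdDiff_iter_comp_addMonoidHom]
  simp only [comp_apply, Int.coe_castAddHom, Int.cast_one]
  split_ifs with h
  · subst h
    simp [fwdDiff_iter_eq_factorial]
  · simp [fwdDiff_iter_pow_eq_zero_of_lt (show 2 * r + 1 < 2 * n + 1 by omega)]

section zpow

variable {K : Type*} [Field K] {z : K}

theorem fwdDiff_iter_zpow (hz : z ≠ 0) (k : ℕ) (y : ℤ) :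
    Δ_[1] ^[k] (fun x : ℤ ↦ z ^ x) y = (z - 1) ^ k * z ^ y := by
  induction k generalizing y with
  | zero => simp
  | succ k ih =>
    rw [iterate_succ_apply', fwdDiff, ih, ih, zpow_add_one₀ hz, pow_succ]
    ring

theorem fwdDiff_iter_zpow_sub_zpow_neg (hz : z ≠ 0) (n : ℕ) :
    Δ_[1] ^[2 * n + 1] (fun x : ℤ ↦ z ^ x - z ^ (-x)) (-(n : ℤ)) =
      (z + 1) * (z - 1) ^ (2 * n + 1) / z ^ (n + 1) := by
  have hsplit : (fun x : ℤ ↦ z ^ x - z ^ (-x)) =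
      (fun x : ℤ ↦ z ^ x) + (-1 : K) • fun x : ℤ ↦ z⁻¹ ^ x := by
    ext x
    simp [sub_eq_add_neg]
  have hinv : (z⁻¹ - 1) ^ (2 * n + 1) = -(z - 1) ^ (2 * n + 1) / z ^ (2 * n + 1) := by
    rw [show z⁻¹ - 1 = -(z - 1) / z by field_simp; ring, div_pow,
      Odd.neg_pow (odd_two_mul_add_one n)]
  rw [hsplit, fwdDiff_iter_add, Pi.add_apply, fwdDiff_iter_const_smul, Pi.smul_apply,
    fwdDiff_iter_zpow hz, fwdDiff_iter_zpow (inv_ne_zero hz), hinv, zpow_neg, zpow_natCast,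
    inv_zpow', neg_neg, zpow_natCast, smul_eq_mul, show 2 * n + 1 = n + (n + 1) by ring, pow_add z]
  field_simp
  ring

end zpow

theorem sum_Icc_one_eq_sum_fin {M : Type*} [AddCommMonoid M] (L : ℕ) (F : ℤ → M) :
    ∑ m ∈ Icc 1 (L : ℤ), F m = ∑ j : Fin L, F ((L - j : ℕ) : ℤ) := by
  symm
  refine sum_bij (fun j _ ↦ ((L - j : ℕ) : ℤ)) (fun j _ ↦ ?_) (fun j _ k _ h ↦ ?_)
    (fun m hm ↦ ?_) (fun _ _ ↦ rfl)
  · simp only [mem_Icc]; omega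
  · ext; omega
  · simp only [mem_Icc] at hm
    exact ⟨⟨L - m.toNat, by omega⟩, mem_univ _, by simp; omega⟩

section OddFunction

variable {R : Type*} [CommRing R]

def oddSingle (m : ℤ) : ℤ → R := Pi.single m 1 - Pi.single (-m) 1

theorem sum_Icc_mul_oddSingle [IsAddTorsionFree R] {f : ℤ → R} (hf : f.Odd) {N x : ℤ}
    (hx : |x| ≤ N) : ∑ m ∈ Icc 1 N, f m * oddSingle m x = f x := by
  have hneg : ∀ m : ℤ, (x = -m) = (-x = m) := fun m ↦ propext neg_eq_iff_eq_neg.symm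
  simp only [oddSingle, Pi.sub_apply, Pi.single_apply, mul_sub, mul_ite, mul_one, mul_zero,
    sum_sub_distrib, hneg, sum_ite_eq, mem_Icc]
  rcases abs_le.mp hx with ⟨h1, h2⟩
  rcases lt_trichotomy x 0 with h | rfl | h
  · rw [if_neg (by omega), if_pos (by omega), hf]
    ring
  · simp [hf.map_zero]
  · rw [if_pos (by omega), if_neg (by omega), sub_zero]

def oddFwdDiffWeight (n : ℕ) (m : ℤ) : R := Δ_[1] ^[2 * n + 1] (oddSingle m) (-(n : ℤ))

theorem fwdDiff_iter_odd_eq_sum [IsAddTorsionFree R] {f : ℤ → R} (hf : f.Odd) (n : ℕ) :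
    Δ_[1] ^[2 * n + 1] f (-(n : ℤ)) =
      ∑ j : Fin (n + 1), f (n + 1 - j : ℕ) * oddFwdDiffWeight n (n + 1 - j : ℕ) := by
  rw [← sum_Icc_one_eq_sum_fin (n + 1) fun m ↦ f m * oddFwdDiffWeight n m, Nat.cast_succ]
  calc Δ_[1] ^[2 * n + 1] f (-(n : ℤ))
      = Δ_[1] ^[2 * n + 1] (∑ m ∈ Icc 1 ((n : ℤ) + 1), f m • oddSingle m) (-(n : ℤ)) := by
        refine fwdDiff_iter_apply_congr fun i hi ↦ ?_
        rw [Finset.sum_apply, ← sum_Icc_mul_oddSingle hf (N := n + 1)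
          (abs_le.mpr ⟨by rw [nsmul_one]; omega, by rw [nsmul_one]; omega⟩)]
        rfl
    _ = ∑ m ∈ Icc 1 ((n : ℤ) + 1), f m * oddFwdDiffWeight n m := by
        simp [oddFwdDiffWeight]

end OddFunction

section Matrix

open Matrix

theorem Matrix.det_updateRow_eq_det_mul_dotProduct {n R : Type*} [Fintype n] [DecidableEq n]
    [CommRing R] {A : Matrix n n R} {c : n → R} {i : n} (hc : A *ᵥ c = Pi.single i 1)
    (u : n → R) : (A.updateRow i u).det = A.det * (u ⬝ᵥ c) := by
  rw [← cramer_transpose_apply, cramer_eq_adjugate_mulVec, ← adjugate_transpose, mulVec_transpose,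
    ← mul_one ((u ᵥ* A.adjugate) i), ← dotProduct_single, ← hc, dotProduct_mulVec, vecMul_vecMul,
    adjugate_mul, ← dotProduct_mulVec, smul_mulVec, one_mulVec, dotProduct_smul, smul_eq_mul,
    mul_comm]

theorem det_of_pow_two_mul_rev_add_one_ne_zero {K : Type*} [Field K] {k : ℕ} {v : Fin k → K}
    (hv : ∀ j, v j ≠ 0) (hinj : Injective fun j ↦ v j ^ 2) :
    (of fun i j : Fin k ↦ v j ^ (2 * (Fin.rev i : ℕ) + 1)).det ≠ 0 := by
  have hfactor : (of fun i j : Fin k ↦ v j ^ (2 * (Fin.rev i : ℕ) + 1)) =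
      of fun i j ↦ v j * ((vandermonde fun j ↦ v j ^ 2)ᵀ.submatrix Fin.revPerm id) i j := by
    ext i j
    simp only [of_apply, submatrix_apply, transpose_apply, vandermonde_apply, Fin.revPerm_apply,
      id_eq, pow_succ, pow_mul]
    ring
  have hsign : ((Equiv.Perm.sign (Fin.revPerm : Equiv.Perm (Fin k)) : ℤ) : K) ≠ 0 :=
    ((Equiv.Perm.sign _).isUnit.map (Int.castRingHom K)).ne_zero
  rw [hfactor, det_mul_row, det_permute, det_transpose]
  exact mul_ne_zero (prod_ne_zero_iff.mpr fun j _ ↦ hv j) <|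
    mul_ne_zero hsign (det_vandermonde_ne_zero_iff.mpr hinj)

theorem det_natSub_pow_odd_ne_zero (n : ℕ) :
    (of fun i j : Fin (n + 1) ↦ ((n + 1 - j : ℕ) : ℝ) ^ (2 * (n - i) + 1)).det ≠ 0 := by
  have hrev : ∀ i : Fin (n + 1), n - (i : ℕ) = Fin.rev i := fun i ↦ by rw [Fin.val_rev]; omega
  simp only [hrev]
  refine det_of_pow_two_mul_rev_add_one_ne_zero (fun j ↦ Nat.cast_ne_zero.mpr (by omega))
    fun j k hjk ↦ ?_
  have hsq : ((n + 1 - j : ℕ) : ℝ) ^ 2 = ((n + 1 - k : ℕ) : ℝ) ^ 2 := hjk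
  have := Nat.pow_left_injective two_ne_zero (by exact_mod_cast hsq : (n + 1 - j) ^ 2 = _)
  ext
  omega

end Matrix

section Weight

noncomputable def phiWeight (n : ℕ) (j : Fin (n + 1)) : ℝ :=
  oddFwdDiffWeight n ((n + 1 - j : ℕ) : ℤ) / (2 * n + 1).factorial

theorem sum_mul_phiWeight {f : ℤ → ℝ} (hf : f.Odd) (n : ℕ) :
    ∑ j : Fin (n + 1), f (n + 1 - j : ℕ) * phiWeight n j =
      Δ_[1] ^[2 * n + 1] f (-(n : ℤ)) / (2 * n + 1).factorial := by
  rw [fwdDiff_iter_odd_eq_sum hf, sum_div]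
  simp [phiWeight, mul_div_assoc]

theorem mulVec_phiWeight (n : ℕ) :
    (Matrix.of fun i j : Fin (n + 1) ↦ ((n + 1 - j : ℕ) : ℝ) ^ (2 * (n - i) + 1)).mulVec
      (phiWeight n) = Pi.single 0 1 := by
  ext i
  have hodd : (fun x : ℤ ↦ (x : ℝ) ^ (2 * (n - i) + 1)).Odd := fun x ↦ by
    simp [Odd.neg_pow (odd_two_mul_add_one _)]
  have hsum := sum_mul_phiWeight hodd n
  rw [fwdDiff_iter_intCast_pow (by omega)] at hsum
  simp only [Int.cast_natCast] at hsum
  simp only [Matrix.mulVec, dotProduct, Matrix.of_apply, hsum, Pi.single_apply]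
  by_cases h : i = 0
  · simp [h, Nat.factorial_ne_zero]
  · have : n - (i : ℕ) ≠ n := by rw [Fin.ext_iff, Fin.val_zero] at h; omega
    simp [h, this]

end Weight

/-- `φ_δ(z) = a^{(2)}_δ(z)/a^{(1)}_δ = (z+1)(z-1)^{2L-1}/(z^L (2L-1)!)`, where
`δ_j = L - j + 1` (1-based). -/
theorem phi_delta_eval (L : ℕ) (hL : 1 ≤ L) (z : ℝ) (hz : z ≠ 0) :
    Matrix.det (Matrix.of fun i j : Fin L =>
        if (i : ℕ) = 0 then
          z ^ (((L - (j : ℕ) : ℕ)) : ℤ) - z ^ (-((L - (j : ℕ) : ℕ) : ℤ))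
        else ((L - (j : ℕ) : ℕ) : ℝ) ^ (2 * (L - 1 - (i : ℕ)) + 1)) /
      Matrix.det (Matrix.of fun i j : Fin L =>
        ((L - (j : ℕ) : ℕ) : ℝ) ^ (2 * (L - 1 - (i : ℕ)) + 1)) =
      (z + 1) * (z - 1) ^ (2 * L - 1) /
        (z ^ L * (Nat.factorial (2 * L - 1) : ℝ)) := by
  obtain ⟨n, rfl⟩ := Nat.exists_eq_add_of_le' hL
  rw [show 2 * (n + 1) - 1 = 2 * n + 1 by omega]
  simp only [Nat.add_sub_cancel]
  set A := Matrix.of fun i j : Fin (n + 1) ↦ ((n + 1 - j : ℕ) : ℝ) ^ (2 * (n - i) + 1)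
  set u : Fin (n + 1) → ℝ := fun j ↦ z ^ ((n + 1 - j : ℕ) : ℤ) - z ^ (-((n + 1 - j : ℕ) : ℤ))
  have hrow : (Matrix.of fun i j : Fin (n + 1) ↦
      if (i : ℕ) = 0 then u j else ((n + 1 - j : ℕ) : ℝ) ^ (2 * (n - i) + 1)) =
      A.updateRow 0 u := by
    ext i j
    by_cases h : i = 0 <;> simp [h, A, Matrix.updateRow_apply, Fin.val_eq_zero_iff]
  have hodd : (fun x : ℤ ↦ z ^ x - z ^ (-x)).Odd := fun x ↦ by simp only [neg_neg]; ring
  rw [hrow, Matrix.det_updateRow_eq_det_mul_dotProduct (mulVec_phiWeight n),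
    mul_div_cancel_left₀ _ (det_natSub_pow_odd_ne_zero n), dotProduct, sum_mul_phiWeight hodd,
    fwdDiff_iter_zpow_sub_zpow_neg hz]
  field_simp
end

section
/- The factorized polynomial q_λ(z) = φ_μ(z)/φ_δ(z) satisfies the ordinary differential equation ∏_{n=1}^L (Z² - μ_n²) q_λ(z) = 0 for z ≠ 0, ±1, where Z = D_z + (Lz² + 2Lz - 2z + L)/(z² - 1). -/
/-!
`φ_δ` has the closed form `(z - 1)^(2L-1) (z + 1) / (z^L (2L-1)!)`: evaluate
`∏_{m ≠ k} (k² - m²)` in factorials and pair the binomial expansion of `(z - 1)^(2L-1) (z + 1)`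
symmetrically around `z^L`. The logarithmic derivative of this closed form is
`(Lz² + 2Lz - 2z + L) / (z (z² - 1))`, so away from `0, ±1` the operator `Z` is the Euler operator
`D = z d/dz` conjugated by `φ_δ`: `Z (g / φ_δ) = (D g) / φ_δ`. Hence
`∏ (Z² - μ_n²) q_λ = (∏ (D² - μ_n²) φ_μ) / φ_δ`, and `φ_μ` is a combination of the monomials
`z^(±μ_j)`, each of which is killed by its factor `D² - μ_j²`.
-/

/-- The single-variable function `φ_ν(z) = Σ_j (z^{ν_j} - z^{-ν_j})/(ν_j ∏_{i≠j}(ν_j² - ν_i²))`. -/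
noncomputable def phiFun {L : ℕ} (ν : Fin L → ℕ) : ℝ → ℝ :=
  fun z => ∑ j : Fin L,
    (z ^ ((ν j : ℤ)) - z ^ (-(ν j : ℤ))) /
      ((ν j : ℝ) * ∏ i ∈ Finset.univ.erase j, ((ν j : ℝ) ^ 2 - (ν i : ℝ) ^ 2))

/-- The operator `Z = D_z + (Lz² + 2Lz - 2z + L)/(z² - 1)` with `D_z = z d/dz`. -/
noncomputable def Zop (L : ℕ) (f : ℝ → ℝ) : ℝ → ℝ :=
  fun z => z * deriv f z +
    (((L : ℝ) * z ^ 2 + 2 * (L : ℝ) * z - 2 * z + (L : ℝ)) / (z ^ 2 - 1)) * f z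

open Finset Filter Topology

section Laurent

variable {ι : Type*} [Fintype ι]

noncomputable def laurentSum (e : ι → ℤ) (a : ι → ℝ) (z : ℝ) : ℝ := ∑ i, a i * z ^ e i

theorem hasDerivAt_laurentSum (e : ι → ℤ) (a : ι → ℝ) {z : ℝ} (hz : z ≠ 0) :
    HasDerivAt (laurentSum e a) (laurentSum e (fun i => e i * a i) z / z) z := by
  have h := HasDerivAt.fun_sum (u := univ) fun i _ =>
    (hasDerivAt_zpow (e i) z (Or.inl hz)).const_mul (a i)
  refine h.congr_deriv ?_
  simp only [laurentSum, sum_div, zpow_sub_one₀ hz]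
  exact sum_congr rfl fun i _ => by field_simp

theorem laurentSum_eq_zero {e : ι → ℤ} {a : ι → ℝ} (ha : ∀ i, a i = 0) (z : ℝ) :
    laurentSum e a z = 0 := by
  simp [laurentSum, ha]

end Laurent

noncomputable def zopWeight (L : ℕ) (z : ℝ) : ℝ :=
  ((L : ℝ) * z ^ 2 + 2 * (L : ℝ) * z - 2 * z + (L : ℝ)) / (z ^ 2 - 1)

theorem Zop_eq_of_eventuallyEq_div {L : ℕ} {f g Φ : ℝ → ℝ} {z g' : ℝ}
    (hf : f =ᶠ[𝓝 z] fun w => g w / Φ w) (hg : HasDerivAt g g' z)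
    (hΦ : HasDerivAt Φ (zopWeight L z / z * Φ z) z) (hΦz : Φ z ≠ 0) (hz : z ≠ 0) :
    Zop L f z = z * g' / Φ z := by
  have hderiv : deriv f z = (g' * Φ z - g z * (zopWeight L z / z * Φ z)) / Φ z ^ 2 :=
    hf.deriv_eq.trans (hg.div hΦ hΦz).deriv
  rw [Zop, hderiv, hf.eq_of_nhds]
  change _ + zopWeight L z * _ = _
  field_simp
  ring

/-- Such a `Φ` conjugates `Zop L` to the Euler operator on `U`: `Zop L (g / Φ) = (z g') / Φ`. -/
def ZopConjugator (L : ℕ) (Φ : ℝ → ℝ) (U : Set ℝ) : Prop :=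
  ∀ w ∈ U, w ≠ 0 ∧ Φ w ≠ 0 ∧ HasDerivAt Φ (zopWeight L w / w * Φ w) w

section Conjugation

variable {ι κ : Type*} [Fintype ι] {L : ℕ} {Φ : ℝ → ℝ} {U : Set ℝ} {f : ℝ → ℝ} {e : ι → ℤ}
  {a : ι → ℝ}

theorem eqOn_Zop_div_laurentSum (hU : IsOpen U) (hΦ : ZopConjugator L Φ U)
    (hf : Set.EqOn f (fun w => laurentSum e a w / Φ w) U) :
    Set.EqOn (Zop L f) (fun w => laurentSum e (fun i => e i * a i) w / Φ w) U := by
  intro w hw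
  obtain ⟨hw0, hΦw, hΦ'⟩ := hΦ w hw
  rw [Zop_eq_of_eventuallyEq_div (hf.eventuallyEq_of_mem (hU.mem_nhds hw))
    (hasDerivAt_laurentSum e a hw0) hΦ' hΦw hw0]
  field_simp

theorem eqOn_Zop_sq_sub_div_laurentSum (hU : IsOpen U) (hΦ : ZopConjugator L Φ U) (m : ℝ)
    (hf : Set.EqOn f (fun w => laurentSum e a w / Φ w) U) :
    Set.EqOn (fun w => Zop L (Zop L f) w - m ^ 2 * f w)
      (fun w => laurentSum e (fun i => ((e i : ℝ) ^ 2 - m ^ 2) * a i) w / Φ w) U := by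
  intro w hw
  have h2 := eqOn_Zop_div_laurentSum hU hΦ (eqOn_Zop_div_laurentSum hU hΦ hf) hw
  simp only at h2 ⊢
  rw [h2, hf hw, mul_div_assoc', div_sub_div_same]
  congr 1
  simp only [laurentSum, mul_sum, ← sum_sub_distrib]
  exact sum_congr rfl fun i _ => by ring

theorem eqOn_foldr_div_laurentSum (hU : IsOpen U) (hΦ : ZopConjugator L Φ U) (μ : κ → ℕ)
    (l : List κ) (hf : Set.EqOn f (fun w => laurentSum e a w / Φ w) U) :
    Set.EqOn (l.foldr (fun n g w => Zop L (Zop L g) w - (μ n : ℝ) ^ 2 * g w) f)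
      (fun w => laurentSum e
        (fun i => (l.map fun n => (e i : ℝ) ^ 2 - (μ n : ℝ) ^ 2).prod * a i) w / Φ w) U := by
  induction l with
  | nil => simpa using hf
  | cons n l ih =>
    refine (eqOn_Zop_sq_sub_div_laurentSum hU hΦ _ ih).trans fun w _ => ?_
    simp only [List.map_cons, List.prod_cons, mul_assoc]

end Conjugation

theorem phiFun_eq_laurentSum {L : ℕ} (ν : Fin L → ℕ) :
    phiFun ν = laurentSum (Sum.elim (fun j => (ν j : ℤ)) fun j => -(ν j : ℤ))
      (Sum.elim (fun j => ((ν j : ℝ) * ∏ i ∈ univ.erase j, ((ν j : ℝ) ^ 2 - (ν i : ℝ) ^ 2))⁻¹)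
        fun j => -((ν j : ℝ) * ∏ i ∈ univ.erase j, ((ν j : ℝ) ^ 2 - (ν i : ℝ) ^ 2))⁻¹) := by
  ext z
  simp only [phiFun, laurentSum, Fintype.sum_sum_type, Sum.elim_inl, Sum.elim_inr,
    ← sum_add_distrib]
  exact sum_congr rfl fun j _ => by ring

theorem phiFun_eq_sum_image {L : ℕ} {ν : Fin L → ℕ} (hν : Function.Injective ν) (z : ℝ) :
    phiFun ν z = ∑ k ∈ univ.image ν, (z ^ (k : ℤ) - z ^ (-(k : ℤ))) /
      ((k : ℝ) * ∏ m ∈ (univ.image ν).erase k, ((k : ℝ) ^ 2 - (m : ℝ) ^ 2)) := by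
  rw [sum_image hν.injOn]
  refine sum_congr rfl fun j _ => ?_
  rw [← image_erase hν, prod_image (hν.injOn.mono (Set.subset_univ _))]

theorem image_univ_sub_eq_Icc (L : ℕ) :
    univ.image (fun j : Fin L => L - (j : ℕ)) = Icc 1 L := by
  ext k
  simp only [mem_image, mem_univ, true_and, mem_Icc]
  constructor
  · rintro ⟨j, rfl⟩
    omega
  · intro hk
    exact ⟨⟨L - k, by omega⟩, by simp only; omega⟩

theorem prod_Icc_sq_sub_sq (n d : ℕ) :
    ((n + d + 1).factorial * d.factorial : ℝ) *
        ∏ m ∈ Icc 1 n, (((n + d + 1 : ℕ) : ℝ) ^ 2 - (m : ℝ) ^ 2) =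
      (n + d).factorial * (2 * n + d + 1).factorial := by
  induction n generalizing d with
  | zero => simp [Nat.factorial_succ, mul_comm]
  | succ n ih =>
    have h := ih (d + 1)
    rw [show n + (d + 1) + 1 = n + 1 + d + 1 by ring, show n + (d + 1) = n + 1 + d by ring,
      show 2 * n + (d + 1) + 1 = 2 * (n + 1) + d by ring, Nat.factorial_succ d] at h
    rw [prod_Icc_succ_top (by omega), Nat.factorial_succ (2 * (n + 1) + d)]
    generalize ∏ m ∈ Icc 1 n, (((n + 1 + d + 1 : ℕ) : ℝ) ^ 2 - (m : ℝ) ^ 2) = P at h ⊢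
    push_cast at h ⊢
    linear_combination (2 * (n : ℝ) + d + 3) * h

theorem two_mul_sq_mul_prod_erase_Icc {k L : ℕ} (hk : 1 ≤ k) (hkL : k ≤ L) :
    2 * (k : ℝ) ^ 2 * ∏ m ∈ (Icc 1 L).erase k, ((k : ℝ) ^ 2 - (m : ℝ) ^ 2) =
      (-1) ^ (L + k) * (L - k).factorial * (L + k).factorial := by
  induction L, hkL using Nat.le_induction with
  | base =>
    obtain ⟨n, rfl⟩ : ∃ n, k = n + 1 := ⟨k - 1, by omega⟩
    have hset : (Icc 1 (n + 1)).erase (n + 1) = Icc 1 n := by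
      ext m; simp only [mem_erase, mem_Icc]; omega
    have h := prod_Icc_sq_sub_sq n 0
    rw [Nat.add_zero, Nat.factorial_zero, Nat.factorial_succ n] at h
    rw [hset, Nat.sub_self, Nat.factorial_zero, show n + 1 + (n + 1) = 2 * n + 1 + 1 by ring,
      Nat.factorial_succ (2 * n + 1), Even.neg_one_pow ⟨n + 1, by ring⟩]
    generalize ∏ m ∈ Icc 1 n, (((n + 1 : ℕ) : ℝ) ^ 2 - (m : ℝ) ^ 2) = P at h ⊢
    refine mul_left_cancel₀ (Nat.cast_ne_zero.2 n.factorial_ne_zero) ?_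
    push_cast at h ⊢
    linear_combination 2 * ((n : ℝ) + 1) * h
  | succ L hkL ih =>
    have hset : (Icc 1 (L + 1)).erase k = insert (L + 1) ((Icc 1 L).erase k) := by
      ext m; simp only [mem_erase, mem_Icc, mem_insert]; omega
    obtain ⟨d, rfl⟩ := Nat.exists_eq_add_of_le hkL
    rw [hset, prod_insert (by simp), mul_left_comm, ih]
    rw [show k + d + 1 - k = d + 1 by omega, show k + d - k = d by omega,
      show k + d + 1 + k = k + d + k + 1 by ring, Nat.factorial_succ, Nat.factorial_succ]
    push_cast
    ring

theorem sub_one_pow_two_mul_add_one (n : ℕ) (z : ℝ) :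
    (z - 1) ^ (2 * n + 1) = ∑ i ∈ range (n + 1),
      (-1) ^ (n + i) * ((2 * n + 1).choose (n + 1 + i) : ℝ) * (z ^ (n + 1 + i) - z ^ (n - i)) := by
  rw [sub_eq_add_neg, add_pow, show 2 * n + 1 + 1 = (n + 1) + (n + 1) by ring, sum_range_add,
    ← sum_range_reflect, ← sum_add_distrib]
  refine sum_congr rfl fun i hi => ?_
  obtain ⟨d, rfl⟩ := Nat.exists_eq_add_of_le (Nat.lt_succ_iff.1 (mem_range.1 hi))
  rw [show i + d + 1 - 1 - i = d by omega, show 2 * (i + d) + 1 - d = 2 * i + d + 1 by omega,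
    show 2 * (i + d) + 1 - (i + d + 1 + i) = d by omega, show i + d + i = 2 * i + d by ring,
    show i + d - i = d by omega,
    Nat.choose_symm_of_eq_add (show 2 * (i + d) + 1 = d + (i + d + 1 + i) by ring),
    pow_succ, pow_add, pow_mul, neg_one_sq]
  ring

theorem sub_one_pow_two_mul_add_one_mul_add_one (n : ℕ) (z : ℝ) :
    (z - 1) ^ (2 * n + 1) * (z + 1) = ∑ i ∈ range (n + 1), (-1) ^ (n + i) *
      (((2 * n + 1).choose (n + 1 + i) : ℝ) - (2 * n + 1).choose (n + 2 + i)) *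
        (z ^ (n + 2 + i) - z ^ (n - i)) := by
  -- multiplying the expansion of `(z - 1) ^ (2 * n + 1)` by `z + 1` shifts half of each pair of
  -- monomials by one; the mismatch with the right-hand side telescopes
  set g : ℕ → ℝ := fun i =>
    (-1) ^ (n + i) * ((2 * n + 1).choose (n + 1 + i) : ℝ) * (z ^ (n + 1 + i) - z ^ (n + 1 - i))
  have hterm : ∀ i ∈ range (n + 1), (-1) ^ (n + i) *
      (((2 * n + 1).choose (n + 1 + i) : ℝ) - (2 * n + 1).choose (n + 2 + i)) *
        (z ^ (n + 2 + i) - z ^ (n - i)) =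
      (-1) ^ (n + i) * ((2 * n + 1).choose (n + 1 + i) : ℝ) * (z ^ (n + 1 + i) - z ^ (n - i)) *
        (z + 1) + (g (i + 1) - g i) := by
    intro i hi
    obtain ⟨d, rfl⟩ := Nat.exists_eq_add_of_le (Nat.lt_succ_iff.1 (mem_range.1 hi))
    simp only [g, show i + d + 1 - i = d + 1 by omega, show i + d + 1 - (i + 1) = d by omega,
      show i + d - i = d by omega, show i + d + 1 + (i + 1) = i + d + 2 + i by ring]
    ring
  have hg0 : g 0 = 0 := by simp [g]
  have hgn : g (n + 1) = 0 := by
    simp [g, Nat.choose_eq_zero_of_lt (show 2 * n + 1 < n + 1 + (n + 1) by omega)]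
  rw [sum_congr rfl hterm, sum_add_distrib, ← sum_mul, ← sub_one_pow_two_mul_add_one,
    sum_range_sub, hg0, hgn, sub_zero, add_zero]

theorem choose_sub_choose_mul_factorial {n i : ℕ} (hi : i ≤ n) :
    (((2 * n + 1).choose (n + 1 + i) : ℝ) - (2 * n + 1).choose (n + 2 + i)) *
      ((n - i).factorial * (n + 2 + i).factorial) = 2 * (i + 1) * (2 * n + 1).factorial := by
  obtain ⟨d, rfl⟩ := Nat.exists_eq_add_of_le hi
  have h1 := Nat.choose_mul_factorial_mul_factorial (show i + d + 1 + i ≤ 2 * (i + d) + 1 by omega)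
  have h2 := Nat.choose_succ_right_eq (2 * (i + d) + 1) (i + d + 1 + i)
  rw [show 2 * (i + d) + 1 - (i + d + 1 + i) = d by omega] at h1 h2
  rw [show i + d - i = d by omega, show i + d + 2 + i = i + d + 1 + i + 1 by ring,
    Nat.factorial_succ (i + d + 1 + i)]
  have h1' : ((2 * (i + d) + 1).choose (i + d + 1 + i) : ℝ) * (i + d + 1 + i).factorial *
      d.factorial = (2 * (i + d) + 1).factorial := by exact_mod_cast h1
  have h2' : ((2 * (i + d) + 1).choose (i + d + 1 + i + 1) : ℝ) * (i + d + 1 + i + 1 : ℕ) =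
      (2 * (i + d) + 1).choose (i + d + 1 + i) * d := by exact_mod_cast h2
  push_cast at h1' h2' ⊢
  linear_combination (2 * (i : ℝ) + 2) * h1' - (d.factorial * (i + d + 1 + i).factorial : ℝ) * h2'

theorem phiFun_delta_eq (n : ℕ) {z : ℝ} (hz : z ≠ 0) :
    phiFun (fun j : Fin (n + 1) => n + 1 - (j : ℕ)) z =
      (z - 1) ^ (2 * n + 1) * (z + 1) / (z ^ (n + 1) * (2 * n + 1).factorial) := by
  have hinj : Function.Injective fun j : Fin (n + 1) => n + 1 - (j : ℕ) := fun a b h => by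
    have := a.isLt; have := b.isLt; simp only at h; omega
  have hIcc (f : ℕ → ℝ) : ∑ k ∈ Icc 1 (n + 1), f k = ∑ i ∈ range (n + 1), f (i + 1) := by
    rw [range_eq_Ico, sum_Ico_add']; rfl
  rw [phiFun_eq_sum_image hinj, image_univ_sub_eq_Icc, eq_div_iff (by positivity), sum_mul, hIcc,
    sub_one_pow_two_mul_add_one_mul_add_one]
  refine sum_congr rfl fun i hi => ?_
  obtain ⟨d, rfl⟩ := Nat.exists_eq_add_of_le (Nat.lt_succ_iff.1 (mem_range.1 hi))
  have hprod := two_mul_sq_mul_prod_erase_Icc (show 1 ≤ i + 1 by omega)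
    (show i + 1 ≤ i + d + 1 by omega)
  have hchoose := choose_sub_choose_mul_factorial (show i ≤ i + d by omega)
  rw [show i + d + 1 - (i + 1) = d by omega, show i + d + 1 + (i + 1) = i + d + 2 + i by ring]
    at hprod
  rw [show i + d - i = d by omega] at hchoose ⊢
  generalize ∏ m ∈ (Icc 1 (i + d + 1)).erase (i + 1), (((i + 1 : ℕ) : ℝ) ^ 2 - (m : ℝ) ^ 2) = P
    at hprod ⊢
  generalize (((2 * (i + d) + 1).choose (i + d + 1 + i) : ℝ) -
    (2 * (i + d) + 1).choose (i + d + 2 + i)) = c at hchoose ⊢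
  have hsign : (-1 : ℝ) ^ (i + d + 2 + i) = (-1) ^ (i + d + i) := by
    rw [show i + d + 2 + i = i + d + i + 2 by ring, pow_add, neg_one_sq, mul_one]
  have hP : P = (-1) ^ (i + d + i) * d.factorial * (i + d + 2 + i).factorial /
      (2 * ((i + 1 : ℕ) : ℝ) ^ 2) := by
    rw [eq_div_iff (by positivity), ← hsign, ← hprod, mul_comm]
  rw [← eq_div_iff (by positivity)] at hchoose
  rw [hP, hchoose, zpow_neg, zpow_natCast]
  have hs : ((-1 : ℝ) ^ (i + d + i)) ^ 2 = 1 := by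
    rw [← pow_mul, mul_comm, pow_mul, neg_one_sq, one_pow]
  field_simp
  rw [hs]
  push_cast
  ring

theorem phiFun_delta_ne_zero (n : ℕ) {z : ℝ} (hz0 : z ≠ 0) (hz1 : z ≠ 1) (hzm1 : z ≠ -1) :
    phiFun (fun j : Fin (n + 1) => n + 1 - (j : ℕ)) z ≠ 0 := by
  rw [phiFun_delta_eq n hz0]
  have h2 : z + 1 ≠ 0 := fun h => hzm1 (by linarith)
  exact div_ne_zero (mul_ne_zero (pow_ne_zero _ (sub_ne_zero.2 hz1)) h2) (by positivity)

theorem hasDerivAt_sub_one_pow_mul_add_one_div (n : ℕ) (c : ℝ) {z : ℝ} (hz0 : z ≠ 0)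
    (hz1 : z ≠ 1) (hzm1 : z ≠ -1) (hc : c ≠ 0) :
    HasDerivAt (fun w => (w - 1) ^ (2 * n + 1) * (w + 1) / (w ^ (n + 1) * c))
      (zopWeight (n + 1) z / z * ((z - 1) ^ (2 * n + 1) * (z + 1) / (z ^ (n + 1) * c))) z := by
  have h := ((((hasDerivAt_id' z).sub_const 1).fun_pow (2 * n + 1)).fun_mul
    ((hasDerivAt_id' z).add_const 1)).fun_div (((hasDerivAt_id' z).fun_pow (n + 1)).mul_const c)
    (mul_ne_zero (pow_ne_zero _ hz0) hc)
  refine h.congr_deriv ?_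
  have h1 : z - 1 ≠ 0 := sub_ne_zero.2 hz1
  have h2 : z + 1 ≠ 0 := fun h => hzm1 (by linarith)
  have h3 : z ^ 2 - 1 ≠ 0 := by
    rw [show z ^ 2 - 1 = (z - 1) * (z + 1) by ring]; exact mul_ne_zero h1 h2
  simp only [zopWeight, Nat.add_sub_cancel]
  field_simp
  push_cast
  ring

theorem zopConjugator_phiFun_delta (n : ℕ) :
    ZopConjugator (n + 1) (phiFun fun j : Fin (n + 1) => n + 1 - (j : ℕ)) {0, 1, -1}ᶜ := by
  intro z hz
  simp only [Set.mem_compl_iff, Set.mem_insert_iff, Set.mem_singleton_iff, not_or] at hz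
  obtain ⟨hz0, hz1, hzm1⟩ := hz
  have hev : (phiFun fun j : Fin (n + 1) => n + 1 - (j : ℕ)) =ᶠ[𝓝 z]
      fun w => (w - 1) ^ (2 * n + 1) * (w + 1) / (w ^ (n + 1) * (2 * n + 1).factorial) :=
    (eventually_ne_nhds hz0).mono fun w hw => phiFun_delta_eq n hw
  refine ⟨hz0, phiFun_delta_ne_zero n hz0 hz1 hzm1, ?_⟩
  rw [hev.eq_of_nhds]
  exact (hasDerivAt_sub_one_pow_mul_add_one_div n _ hz0 hz1 hzm1
    (by positivity)).congr_of_eventuallyEq hev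

theorem q_lambda_ode_general (L : ℕ) (hL : 1 ≤ L) (μ : Fin L → ℕ)
    (z : ℝ) (hz0 : z ≠ 0) (hz1 : z ≠ 1) (hzm1 : z ≠ -1) :
    ((List.finRange L).foldr
        (fun n (f : ℝ → ℝ) =>
          fun w => Zop L (Zop L f) w - (μ n : ℝ) ^ 2 * f w)
        (fun w => phiFun μ w / phiFun (fun j : Fin L => L - (j : ℕ)) w)) z = 0 := by
  obtain ⟨n, rfl⟩ : ∃ n, L = n + 1 := ⟨L - 1, by omega⟩
  have hz : z ∈ ({0, 1, -1}ᶜ : Set ℝ) := by simp [hz0, hz1, hzm1]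
  rw [eqOn_foldr_div_laurentSum (Set.toFinite _).isClosed.isOpen_compl
    (zopConjugator_phiFun_delta n) μ _ (fun w _ => by rw [phiFun_eq_laurentSum]) hz]
  beta_reduce
  rw [laurentSum_eq_zero, zero_div]
  intro i
  refine mul_eq_zero_of_left (List.prod_eq_zero (List.mem_map.2 ?_)) _
  rcases i with j | j <;> exact ⟨j, List.mem_finRange j, by simp⟩

/-- The separated polynomial `q_λ(z) = φ_μ(z)/φ_δ(z)` satisfies
`∏_{n=1}^L (Z² - μ_n²) q_λ(z) = 0` for `z ≠ 0, ±1`, with `δ_j = L - j + 1`. -/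
theorem q_lambda_ode (L : ℕ) (hL : 1 ≤ L) (μ : Fin L → ℕ)
    (hpos : ∀ i, 0 < μ i) (hanti : ∀ i j : Fin L, i < j → μ j < μ i)
    (z : ℝ) (hz0 : z ≠ 0) (hz1 : z ≠ 1) (hzm1 : z ≠ -1) :
    ((List.finRange L).foldr
        (fun n (f : ℝ → ℝ) =>
          fun w => Zop L (Zop L f) w - (μ n : ℝ) ^ 2 * f w)
        (fun w => phiFun μ w / phiFun (fun j : Fin L => L - (j : ℕ)) w)) z = 0 :=
  q_lambda_ode_general L hL μ z hz0 hz1 hzm1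
end

section
/- Column combination identity: for each fixed r in {1,...,L}, a_μ(x_1,...,x_L) = (-1)^{r-1} [ ∏_{l=1}^L x_l^{μ_r} · det_{L-1}[x_{i+1}^{-μ_r}(x_{i+1}^{μ_j} - x_{i+1}^{-μ_j}) - x_i^{-μ_r}(x_i^{μ_j} - x_i^{-μ_j})]_{i≠L, j≠r} − ∏_{l=1}^L x_l^{-μ_r} · det_{L-1}[x_{i+1}^{μ_r}(x_{i+1}^{μ_j} - x_{i+1}^{-μ_j}) - x_i^{μ_r}(x_i^{μ_j} - x_i^{-μ_j})]_{i≠L, j≠r} ]. -/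
/-!
Column `r` of the matrix is `u - v` with `u i = x i ^ μ r` and `v i = x i ^ (-μ r)`, so by
multilinearity the determinant is `det (A with column r := u) - det (A with column r := v)`.
In each term, move column `r` to the front (sign `(-1)^r`) and divide row `i` by `x i ^ (±μ r)`:
the first column becomes all ones, and subtracting from each row the previous one and expanding
along the first column leaves the `(L-1) × (L-1)` determinant of consecutive row differences.
-/

open Matrix

namespace Matrix

variable {R : Type*} [CommRing R]

theorem det_updateCol_sub {m : Type*} [DecidableEq m] [Fintype m] (M : Matrix m m R) (j : m)
    (u v : m → R) :
    (M.updateCol j (u - v)).det = (M.updateCol j u).det - (M.updateCol j v).det :=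
  eq_sub_of_add_eq (by rw [← det_updateCol_add, sub_add_cancel])

theorem det_updateCol_eq_neg_one_pow_mul_det_cons {n : ℕ}
    (B : Matrix (Fin (n + 1)) (Fin (n + 1)) R) (r : Fin (n + 1)) (u : Fin (n + 1) → R) :
    (B.updateCol r u).det =
      (-1) ^ (r : ℕ) * (of fun i => Fin.cons (u i) fun k => B i (r.succAbove k)).det := by
  have hmove : (of fun i => Fin.cons (u i) fun k => B i (r.succAbove k) : Matrix _ _ R) =
      (B.updateCol r u).submatrix id r.cycleRange.symm := by
    ext i j
    cases j using Fin.cases with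
    | zero => simp [Fin.cycleRange_symm_zero]
    | succ k => simp [Fin.cycleRange_symm_succ]
  have hsign : ((Equiv.Perm.sign r.cycleRange.symm : ℤˣ) : R) = (-1) ^ (r : ℕ) := by
    rw [Equiv.Perm.sign_symm, Fin.sign_cycleRange]
    push_cast
    rfl
  rw [hmove, det_permute', hsign, ← mul_assoc, ← pow_add, ← two_mul, pow_mul, neg_one_sq,
    one_pow, one_mul]

theorem det_eq_det_succ_sub_castSucc_of_forall_eq_one {n : ℕ}
    (N : Matrix (Fin (n + 1)) (Fin (n + 1)) R) (h : ∀ i, N i 0 = 1) :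
    N.det = (of fun i j : Fin n => N i.succ j.succ - N i.castSucc j.succ).det := by
  set D : Matrix (Fin (n + 1)) (Fin (n + 1)) R :=
    of fun i => Fin.cases (N 0) (fun k => N k.succ - N k.castSucc) i
  have hrows : N.det = D.det :=
    det_eq_of_forall_row_eq_smul_add_pred (fun _ => 1) (fun _ => rfl)
      (fun i j => by simp [D])
  have hcol : ∀ i : Fin n, D i.succ 0 = 0 := fun i => by simp [D, h]
  rw [hrows, det_succ_column_zero, Fin.sum_univ_succ,
    Finset.sum_eq_zero fun i _ => by rw [hcol i, mul_zero, zero_mul]]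
  simp only [D, of_apply, Fin.cases_zero, h, Fin.val_zero, pow_zero, one_mul, add_zero]
  rfl

theorem det_cons_eq_prod_mul_det_succ_sub_castSucc {F : Type*} [Field F] {n : ℕ}
    (d : Fin (n + 1) → F) (hd : ∀ i, d i ≠ 0) (M : Matrix (Fin (n + 1)) (Fin n) F) :
    (of fun i => Fin.cons (d i) (M i) : Matrix _ _ F).det =
      (∏ i, d i) *
        (of fun i j : Fin n =>
          (d i.succ)⁻¹ * M i.succ j - (d i.castSucc)⁻¹ * M i.castSucc j).det := by
  have hfactor : (of fun i => Fin.cons (d i) (M i) : Matrix _ _ F) =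
      of fun i j =>
        d i * (of fun i => Fin.cons 1 fun k => (d i)⁻¹ * M i k : Matrix _ _ F) i j := by
    ext i j
    cases j using Fin.cases with
    | zero => simp
    | succ k => simp [hd i]
  rw [hfactor, det_mul_column, det_eq_det_succ_sub_castSucc_of_forall_eq_one _ (fun i => rfl)]
  rfl

end Matrix

theorem column_combination_identity_general (n : ℕ) (F : Type*) [Field F]
    (μ : Fin (n + 1) → ℕ)
    (x : Fin (n + 1) → F) (hx : ∀ i, x i ≠ 0) (r : Fin (n + 1)) :
    Matrix.det (Matrix.of fun i j : Fin (n + 1) =>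
        x i ^ ((μ j : ℤ)) - x i ^ (-(μ j : ℤ))) =
      (-1 : F) ^ (r : ℕ) *
        ((∏ l : Fin (n + 1), x l ^ ((μ r : ℤ))) *
          Matrix.det (Matrix.of fun i j : Fin n =>
            x i.succ ^ (-(μ r : ℤ)) *
                (x i.succ ^ ((μ (r.succAbove j) : ℤ)) -
                  x i.succ ^ (-(μ (r.succAbove j) : ℤ))) -
              x i.castSucc ^ (-(μ r : ℤ)) *
                (x i.castSucc ^ ((μ (r.succAbove j) : ℤ)) -
                  x i.castSucc ^ (-(μ (r.succAbove j) : ℤ)))) -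
          (∏ l : Fin (n + 1), x l ^ (-(μ r : ℤ))) *
            Matrix.det (Matrix.of fun i j : Fin n =>
              x i.succ ^ ((μ r : ℤ)) *
                  (x i.succ ^ ((μ (r.succAbove j) : ℤ)) -
                    x i.succ ^ (-(μ (r.succAbove j) : ℤ))) -
                x i.castSucc ^ ((μ r : ℤ)) *
                  (x i.castSucc ^ ((μ (r.succAbove j) : ℤ)) -
                    x i.castSucc ^ (-(μ (r.succAbove j) : ℤ))))) := by
  set A : Matrix (Fin (n + 1)) (Fin (n + 1)) F :=
    of fun i j => x i ^ (μ j : ℤ) - x i ^ (-(μ j : ℤ))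
  have hsplit : A = A.updateCol r
      ((fun i => x i ^ (μ r : ℤ)) - fun i => x i ^ (-(μ r : ℤ))) :=
    (updateCol_eq_self A r).symm
  have hzpow : ∀ c : ℤ, ∀ i, x i ^ c ≠ 0 := fun c i => zpow_ne_zero c (hx i)
  rw [hsplit, det_updateCol_sub, det_updateCol_eq_neg_one_pow_mul_det_cons,
    det_updateCol_eq_neg_one_pow_mul_det_cons, ← mul_sub,
    det_cons_eq_prod_mul_det_succ_sub_castSucc _ (hzpow _) fun i k => A i (r.succAbove k),
    det_cons_eq_prod_mul_det_succ_sub_castSucc _ (hzpow _) fun i k => A i (r.succAbove k)]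
  simp only [← _root_.zpow_neg, neg_neg]
  rfl

/-- Column combination identity: for each fixed `r`,
`a_μ(x) = (-1)^{r-1} [ ∏_l x_l^{μ_r} det_{L-1}[x_{i+1}^{-μ_r}(x_{i+1}^{μ_j}-x_{i+1}^{-μ_j})
 - x_i^{-μ_r}(x_i^{μ_j}-x_i^{-μ_j})] − ∏_l x_l^{-μ_r} det_{L-1}[…with +μ_r…] ]`,
rows `i = 1,…,L-1`, columns `j ∈ {1,…,L} \ {r}`. -/
theorem column_combination_identity (n : ℕ) (F : Type*) [Field F]
    (μ : Fin (n + 1) → ℕ) (hpos : ∀ i, 0 < μ i)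
    (x : Fin (n + 1) → F) (hx : ∀ i, x i ≠ 0) (r : Fin (n + 1)) :
    Matrix.det (Matrix.of fun i j : Fin (n + 1) =>
        x i ^ ((μ j : ℤ)) - x i ^ (-(μ j : ℤ))) =
      (-1 : F) ^ (r : ℕ) *
        ((∏ l : Fin (n + 1), x l ^ ((μ r : ℤ))) *
          Matrix.det (Matrix.of fun i j : Fin n =>
            x i.succ ^ (-(μ r : ℤ)) *
                (x i.succ ^ ((μ (r.succAbove j) : ℤ)) -
                  x i.succ ^ (-(μ (r.succAbove j) : ℤ))) -
              x i.castSucc ^ (-(μ r : ℤ)) *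
                (x i.castSucc ^ ((μ (r.succAbove j) : ℤ)) -
                  x i.castSucc ^ (-(μ (r.succAbove j) : ℤ)))) -
          (∏ l : Fin (n + 1), x l ^ (-(μ r : ℤ))) *
            Matrix.det (Matrix.of fun i j : Fin n =>
              x i.succ ^ ((μ r : ℤ)) *
                  (x i.succ ^ ((μ (r.succAbove j) : ℤ)) -
                    x i.succ ^ (-(μ (r.succAbove j) : ℤ))) -
                x i.castSucc ^ ((μ r : ℤ)) *
                  (x i.castSucc ^ ((μ (r.succAbove j) : ℤ)) -
                    x i.castSucc ^ (-(μ (r.succAbove j) : ℤ))))) :=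
  column_combination_identity_general n F μ x hx r
end
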